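/- arXiv:1009.5794 — 9 statements merged into one kernel-verified Lean document; each statement's English description precedes it below -/
import Mathlib

section
/- Let p be a prime and let f = z^{-1} + z^{p-1} in the Laurent polynomial ring 𝔽_p[z, z^{-1}]. Then for every m ≥ 1, the constant term (coefficient of z^0) of f^m is zero. -/
/-!
In characteristic `p` we have `z⁻¹ + z^(p-1) = z⁻¹ (1 + z)^p`, so the constant term of the `m`-th
power is the coefficient of `z^m` in `(1 + z)^(p m)`, namely `C(p m, m) = p · C(p m - 1, m - 1)`.
-/

open LaurentPolynomial Polynomial

namespace LaurentPolynomial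

variable {R : Type*}

theorem coeff_toLaurent_natCast [Semiring R] (f : R[X]) (n : ℕ) :
    (toLaurent f).coeff n = f.coeff n :=
  Finsupp.mapDomain_apply Nat.cast_injective _ n

theorem coeff_T_neg_mul_toLaurent_zero [Semiring R] (n : ℕ) (f : R[X]) :
    (T (-n) * toLaurent f).coeff 0 = f.coeff n := by
  rw [T, AddMonoidAlgebra.coeff_single_mul_apply, one_mul, neg_neg, add_zero,
    coeff_toLaurent_natCast]

theorem T_neg_one_add_T_sub_one_eq [CommSemiring R] (p : ℕ) [Fact p.Prime] [CharP R p] :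
    (T (-1) + T ((p : ℤ) - 1) : R[T;T⁻¹]) = T (-1) * toLaurent ((1 + X) ^ p) := by
  rw [add_pow_char, one_pow, map_add, map_one, toLaurent_X_pow, mul_add, mul_one, ← T_add,
    neg_add_eq_sub]

end LaurentPolynomial

theorem constant_term_pow_eq_zero (p : ℕ) (hp : p.Prime) :
    ∀ m : ℕ, 1 ≤ m →
      (((LaurentPolynomial.T (-1) + LaurentPolynomial.T ((p : ℤ) - 1) :
          LaurentPolynomial (ZMod p)) ^ m).coeff 0) = 0 := by
  have := Fact.mk hp
  intro m hm
  rw [T_neg_one_add_T_sub_one_eq, mul_pow, T_pow, ← map_pow, ← pow_mul, mul_neg_one,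
    coeff_T_neg_mul_toLaurent_zero, coeff_one_add_X_pow, ZMod.natCast_eq_zero_iff]
  exact Dvd.intro _ (Nat.choose_mul_right (by omega)).symm
end

section
/- Let p be a prime and let f = z^{-1} + z^{p-1} in 𝔽_p[z, z^{-1}]. Then for every k ≥ 1, the constant term of z^{-1} · f^{p^k − 1} equals (−1)^{p^{k−1}}; in particular it is nonzero in 𝔽_p. -/
/-!
Writing `f = z⁻¹ (1 + z^p)`, the Laurent polynomial `z⁻¹ f^(p^k - 1)` is `z^(-p^k) (1 + z^p)^(p^k - 1)`,
so its constant term is the binomial coefficient `C(p^k - 1, p^(k-1))`. Modulo `p` one has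
`C(p^k - 1, j) = (-1)^j` for all `j < p^k`, by Pascal's rule and `p ∣ C(p^k, j)` for `0 < j < p^k`.
-/

open LaurentPolynomial Polynomial

theorem Nat.cast_choose_prime_pow_sub_one {R : Type*} [Ring R] {p : ℕ} [Fact p.Prime] [CharP R p]
    {k j : ℕ} (hj : j < p ^ k) : ((p ^ k - 1).choose j : R) = (-1) ^ j := by
  induction j with
  | zero => simp
  | succ j ih =>
    have hpk : p ^ k - 1 + 1 = p ^ k :=
      Nat.sub_add_cancel (Nat.one_le_pow _ _ (Fact.out : p.Prime).pos)
    have hvanish : ((p ^ k).choose (j + 1) : R) = 0 :=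
      (CharP.cast_eq_zero_iff R p _).2 ((Fact.out : p.Prime).dvd_choose_pow j.succ_ne_zero hj.ne)
    rw [← hpk, Nat.choose_succ_succ, Nat.cast_add, ih (by omega)] at hvanish
    rw [pow_succ, mul_neg_one, eq_neg_of_add_eq_zero_right hvanish]

theorem LaurentPolynomial.coeff_zero_T_neg_mul_toLaurent {R : Type*} [Semiring R] (n : ℕ)
    (f : R[X]) : (T (-n) * toLaurent f).coeff 0 = f.coeff n := by
  have := AddMonoidAlgebra.coeff_single_mul_add (toLaurent f) (1 : R) (-n : ℤ) n
  rwa [neg_add_cancel, one_mul, LaurentPolynomial.coeff_toLaurent,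
    ← Nat.castEmbedding_apply (R := ℤ),
    Finsupp.mapDomain_apply Nat.castEmbedding.injective] at this

theorem LaurentPolynomial.coeff_zero_T_neg_one_mul_pow {R : Type*} [CommSemiring R] {m n j : ℕ}
    (h : n + 1 = j * m) :
    (T (-1) * (T (-1) + T ((m : ℤ) - 1)) ^ n : R[T;T⁻¹]).coeff 0 = n.choose j := by
  have hf : (T (-1) + T ((m : ℤ) - 1) : R[T;T⁻¹]) = T (-1) * toLaurent (expand R m (1 + X)) := by
    rw [map_add, expand_X, map_one, map_add, map_one, toLaurent_X_pow, mul_add, mul_one, ← T_add,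
      neg_add_eq_sub]
  calc (T (-1) * (T (-1) + T ((m : ℤ) - 1)) ^ n : R[T;T⁻¹]).coeff 0
      = (T (-(n + 1 : ℕ)) * toLaurent (expand R m ((1 + X) ^ n))).coeff 0 := by
        rw [hf, mul_pow, ← mul_assoc, ← pow_succ', T_pow, mul_neg_one, map_pow, map_pow]
    _ = n.choose j := by
        have hm : 0 < m := Nat.pos_of_ne_zero (by rintro rfl; omega)
        rw [coeff_zero_T_neg_mul_toLaurent, h, coeff_expand_mul hm, coeff_one_add_X_pow]

theorem constant_term_zinv_mul_pow (p : ℕ) (hp : p.Prime) (k : ℕ) (hk : 1 ≤ k) :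
    ((LaurentPolynomial.T (-1) *
        (LaurentPolynomial.T (-1) + LaurentPolynomial.T ((p : ℤ) - 1)) ^ (p ^ k - 1) :
        LaurentPolynomial (ZMod p)).coeff 0)
      = (-1 : ZMod p) ^ (p ^ (k - 1)) ∧
    ((LaurentPolynomial.T (-1) *
        (LaurentPolynomial.T (-1) + LaurentPolynomial.T ((p : ℤ) - 1)) ^ (p ^ k - 1) :
        LaurentPolynomial (ZMod p)).coeff 0) ≠ 0 := by
  have : Fact p.Prime := ⟨hp⟩
  have hn : p ^ k - 1 + 1 = p ^ (k - 1) * p := by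
    rw [Nat.sub_add_cancel (Nat.one_le_pow _ _ hp.pos), ← pow_succ, Nat.sub_add_cancel hk]
  have hj : p ^ (k - 1) < p ^ k := Nat.pow_lt_pow_right hp.one_lt (by omega)
  have hcoeff : (T (-1) * (T (-1) + T ((p : ℤ) - 1)) ^ (p ^ k - 1) :
      LaurentPolynomial (ZMod p)).coeff 0 = (-1) ^ p ^ (k - 1) := by
    rw [coeff_zero_T_neg_one_mul_pow hn, Nat.cast_choose_prime_pow_sub_one hj]
  exact ⟨hcoeff, hcoeff ▸ pow_ne_zero _ (neg_ne_zero.2 one_ne_zero)⟩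
end

section
/- The subspace of Laurent polynomials with zero constant term is not a Mathieu subspace of 𝔽_p[z, z^{-1}] for any prime p: explicitly, there exist f, g ∈ 𝔽_p[z, z^{-1}] such that the constant term of f^m is 0 for all m ≥ 1, but the constant term of g · f^m is nonzero for infinitely many m. -/
/-!
Write `f = z⁻¹ + z^(p-1) = z⁻¹ (1 + z^p)`. The coefficient of `z^n` in `f^m` is `C(m, k)`
when `p k = n + m` and vanishes when `p ∤ n + m`. So the constant term of `f^m` is `0` or
`C(p s, s)`, and Lucas' theorem gives `C(p s, s) ≡ 0 (mod p)` for `s ≥ 1`. With `g = z⁻¹` and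
`m = p^(N+1) - 1`, the constant term of `g f^m` is `C(p^(N+1) - 1, p^N)`, nonzero mod `p` by
Lucas' theorem because every base-`p` digit of `p^(N+1) - 1` equals `p - 1`.
-/

open Finset LaurentPolynomial

namespace ZMod

variable {p : ℕ} [Fact p.Prime]

theorem natCast_choose_eq_choose_mod_mul_choose_div (n k : ℕ) :
    (n.choose k : ZMod p) = (n % p).choose (k % p) * (n / p).choose (k / p) := by
  exact_mod_cast (ZMod.natCast_eq_natCast_iff _ _ p).mpr
    Choose.choose_modEq_choose_mod_mul_choose_div_nat

theorem natCast_choose_mul_self_eq_zero {s : ℕ} (hs : 0 < s) :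
    ((p * s).choose s : ZMod p) = 0 := by
  induction s using Nat.strong_induction_on with
  | _ s ih =>
    have hp : p.Prime := Fact.out
    rw [natCast_choose_eq_choose_mod_mul_choose_div, Nat.mul_mod_right,
      Nat.mul_div_cancel_left _ hp.pos]
    obtain ⟨t, rfl⟩ | hndvd := em (p ∣ s)
    · have ht : 0 < t := Nat.pos_of_mul_pos_left hs
      rw [Nat.mul_mod_right, Nat.mul_div_cancel_left _ hp.pos,
        ih t (lt_mul_left ht hp.one_lt) ht, mul_zero]
    · rw [Nat.choose_eq_zero_of_lt (Nat.pos_of_ne_zero (mt Nat.dvd_of_mod_eq_zero hndvd)),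
        Nat.cast_zero, zero_mul]

theorem natCast_choose_prime_sub_one_ne_zero {r : ℕ} (hr : r < p) :
    ((p - 1).choose r : ZMod p) ≠ 0 := by
  have hp : p.Prime := Fact.out
  rw [Ne, ZMod.natCast_eq_zero_iff]
  intro hdvd
  have hfact : p ∣ (p - 1).factorial := by
    rw [← Nat.choose_mul_factorial_mul_factorial (Nat.le_sub_one_of_lt hr)]
    exact (hdvd.mul_right _).mul_right _
  exact absurd (hp.dvd_factorial.mp hfact) (by omega)

theorem natCast_choose_pow_sub_one_ne_zero (n : ℕ) {k : ℕ} (hk : k < p ^ n) :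
    ((p ^ n - 1).choose k : ZMod p) ≠ 0 := by
  have hp : p.Prime := Fact.out
  induction n generalizing k with
  | zero => simp_all
  | succ n ih =>
    have hdigits : p ^ (n + 1) - 1 = (p - 1) + p * (p ^ n - 1) := by
      have : p * (p ^ n - 1) + p = p ^ (n + 1) := by
        rw [← Nat.mul_add_one, Nat.sub_add_cancel (pow_pos hp.pos n), pow_succ']
      have := hp.pos
      omega
    rw [natCast_choose_eq_choose_mod_mul_choose_div, hdigits, Nat.add_mul_mod_self_left,
      Nat.mod_eq_of_lt (Nat.sub_lt hp.pos one_pos), Nat.add_mul_div_left _ _ hp.pos,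
      Nat.div_eq_of_lt (Nat.sub_lt hp.pos one_pos), zero_add]
    exact mul_ne_zero (natCast_choose_prime_sub_one_ne_zero (Nat.mod_lt _ hp.pos))
      (ih (Nat.div_lt_of_lt_mul (by rwa [← pow_succ'])))

end ZMod

namespace LaurentPolynomial

variable {R : Type*} [CommSemiring R]

theorem coeff_T_mul_add (a n : ℤ) (q : R[T;T⁻¹]) : (T a * q).coeff (a + n) = q.coeff n := by
  rw [T, AddMonoidAlgebra.coeff_single_mul_add, one_mul]

theorem coeff_T_add_T_pow (a b n : ℤ) (m : ℕ) :
    ((T a + T b) ^ m : R[T;T⁻¹]).coeff n =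
      ∑ k ∈ range (m + 1), if a * m + (b - a) * k = n then (m.choose k : R) else 0 := by
  rw [add_comm, add_pow, AddMonoidAlgebra.coeff_sum, Finsupp.finsetSum_apply]
  refine sum_congr rfl fun k hk => ?_
  rw [T_pow, T_pow, ← T_add, ← map_natCast C, T_mul, ← single_eq_C_mul_T,
    AddMonoidAlgebra.coeff_single, Finsupp.single_apply,
    Nat.cast_sub (Nat.lt_succ_iff.mp (mem_range.mp hk))]
  exact if_congr (by constructor <;> intro h <;> linarith) rfl rfl

variable (p : ℕ)

theorem coeff_T_neg_one_add_T_pow_of_mul_eq (hp : 0 < p) {n : ℤ} {m k : ℕ}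
    (hk : (p * k : ℤ) = n + m) :
    ((T (-1) + T ((p : ℤ) - 1)) ^ m : R[T;T⁻¹]).coeff n = m.choose k := by
  calc ((T (-1) + T ((p : ℤ) - 1)) ^ m : R[T;T⁻¹]).coeff n
      = ∑ j ∈ range (m + 1), if j = k then (m.choose j : R) else 0 := by
        rw [coeff_T_add_T_pow]
        refine sum_congr rfl fun j _ => if_congr ?_ rfl rfl
        have : -1 * (m : ℤ) + ((p : ℤ) - 1 - -1) * j = n ↔ (p : ℤ) * j = p * k := by
          constructor <;> intro h <;> linarith
        rw [this, mul_right_inj' (by positivity), Nat.cast_inj]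
    _ = m.choose k := by
        rw [sum_ite_eq']
        split_ifs with hkm
        · rfl
        · rw [Nat.choose_eq_zero_of_lt (by simpa using hkm), Nat.cast_zero]

theorem coeff_T_neg_one_add_T_pow_of_not_dvd {n : ℤ} {m : ℕ} (hdvd : ¬(p : ℤ) ∣ n + m) :
    ((T (-1) + T ((p : ℤ) - 1)) ^ m : R[T;T⁻¹]).coeff n = 0 := by
  rw [coeff_T_add_T_pow]
  exact sum_eq_zero fun k _ => if_neg fun h => hdvd ⟨k, by linarith⟩

end LaurentPolynomial

theorem laurent_not_mathieu (p : ℕ) (hp : p.Prime) :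
    ∃ f g : LaurentPolynomial (ZMod p),
      (∀ m : ℕ, 1 ≤ m → ((f ^ m).coeff 0) = 0) ∧
      (∀ N : ℕ, ∃ m : ℕ, N ≤ m ∧ ((g * f ^ m).coeff 0) ≠ 0) := by
  have := Fact.mk hp
  refine ⟨T (-1) + T ((p : ℤ) - 1), T (-1), fun m hm => ?_, fun N => ?_⟩
  · by_cases hdvd : p ∣ m
    · obtain ⟨s, rfl⟩ := hdvd
      rw [coeff_T_neg_one_add_T_pow_of_mul_eq p hp.pos (k := s) (by push_cast; ring)]
      exact ZMod.natCast_choose_mul_self_eq_zero (Nat.pos_of_mul_pos_left hm)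
    · exact coeff_T_neg_one_add_T_pow_of_not_dvd p (by rwa [zero_add, Int.natCast_dvd_natCast])
  · have hpN : p ^ N < p ^ (N + 1) := pow_lt_pow_right₀ hp.one_lt N.lt_succ_self
    have hN : N < p ^ N := Nat.lt_pow_self hp.one_lt
    refine ⟨p ^ (N + 1) - 1, by omega, ?_⟩
    have hk : p * p ^ N = 1 + (p ^ (N + 1) - 1) := by rw [← pow_succ']; omega
    rw [show (0 : ℤ) = -1 + 1 by norm_num, coeff_T_mul_add,
      coeff_T_neg_one_add_T_pow_of_mul_eq p hp.pos (k := p ^ N) (by exact_mod_cast hk)]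
    exact ZMod.natCast_choose_pow_sub_one_ne_zero (N + 1) hpN
end

section
/- Let G be a finite group and R a commutative ring, and let V_G be the set of elements of the group algebra R[G] whose coefficient of the identity element 1_G is zero. If V_G is a (two-sided) Mathieu subspace of R[G], then every u ∈ R[G] with u^m ∈ V_G for all m ≥ 1 is nilpotent. -/
/-!
The constant term of `g⁻¹ * u ^ m` is the `g`-coefficient of `u ^ m`, so the Mathieu property
applied with `b = g⁻¹` makes every coefficient of `u ^ m` vanish for large `m`; as `G` is finite,
a single exponent works for all coefficients at once.
-/

namespace MonoidAlgebra

variable {R G : Type*} [Semiring R]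

theorem coeff_one_single_inv_mul [Group G] (g : G) (x : MonoidAlgebra R G) :
    (single g⁻¹ 1 * x).coeff 1 = x.coeff g := by
  simp [coeff_single_mul_apply]

theorem isNilpotent_of_eventually_coeff_pow_eq_zero [Monoid G] [Finite G] {x : MonoidAlgebra R G}
    (h : ∀ g, ∀ᶠ m in Filter.atTop, (x ^ m).coeff g = 0) : IsNilpotent x := by
  obtain ⟨N, hN⟩ := (Filter.eventually_all.2 h).exists
  exact ⟨N, by ext g; simpa using hN g⟩

end MonoidAlgebra

theorem mathieu_imp_nilpotent {R G : Type*} [CommRing R] [Group G] [Fintype G]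
    (hM : ∀ a b c : MonoidAlgebra R G, (∀ m : ℕ, 1 ≤ m → (a ^ m).coeff 1 = 0) →
      ∃ N : ℕ, ∀ m : ℕ, N ≤ m → (b * a ^ m * c).coeff 1 = 0)
    (u : MonoidAlgebra R G) (hu : ∀ m : ℕ, 1 ≤ m → (u ^ m).coeff 1 = 0) :
    IsNilpotent u := by
  refine MonoidAlgebra.isNilpotent_of_eventually_coeff_pow_eq_zero fun g => ?_
  obtain ⟨N, hN⟩ := hM u (MonoidAlgebra.single g⁻¹ 1) 1 hu
  filter_upwards [Filter.eventually_ge_atTop N] with m hm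
  simpa [MonoidAlgebra.coeff_one_single_inv_mul] using hN m hm
end

section
/- Let G be a finite group and R a commutative ring. If every u ∈ R[G] satisfying u^m ∈ V_G for all m ≥ 1 is nilpotent, then V_G is a Mathieu subspace of R[G], where V_G is the set of elements of R[G] with zero coefficient at 1_G. -/
theorem IsNilpotent.eventually_mul_pow_mul_eq_zero {A : Type*} [MonoidWithZero A] {a : A}
    (ha : IsNilpotent a) (b c : A) : ∃ N : ℕ, ∀ m : ℕ, N ≤ m → b * a ^ m * c = 0 := by
  obtain ⟨N, hN⟩ := ha
  exact ⟨N, fun m hm => by rw [pow_eq_zero_of_le hm hN, mul_zero, zero_mul]⟩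

theorem nilpotent_imp_mathieu_general {R G : Type*} [CommRing R] [Group G]
    (hnil : ∀ u : MonoidAlgebra R G, (∀ m : ℕ, 1 ≤ m → (u ^ m).coeff 1 = 0) → IsNilpotent u) :
    ∀ a b c : MonoidAlgebra R G, (∀ m : ℕ, 1 ≤ m → (a ^ m).coeff 1 = 0) →
      ∃ N : ℕ, ∀ m : ℕ, N ≤ m → (b * a ^ m * c).coeff 1 = 0 := by
  intro a b c ha
  obtain ⟨N, hN⟩ := (hnil a ha).eventually_mul_pow_mul_eq_zero b c
  exact ⟨N, fun m hm => by simp [hN m hm]⟩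

theorem nilpotent_imp_mathieu {R G : Type*} [CommRing R] [Group G] [Fintype G]
    (hnil : ∀ u : MonoidAlgebra R G, (∀ m : ℕ, 1 ≤ m → (u ^ m).coeff 1 = 0) → IsNilpotent u) :
    ∀ a b c : MonoidAlgebra R G, (∀ m : ℕ, 1 ≤ m → (a ^ m).coeff 1 = 0) →
      ∃ N : ℕ, ∀ m : ℕ, N ≤ m → (b * a ^ m * c).coeff 1 = 0 :=
  nilpotent_imp_mathieu_general hnil
end

section
/- Let G be a finite group and R an integral domain of characteristic 0, or of characteristic p > |G|. Then any u ∈ R[G] such that the coefficient of 1_G in u^m is zero for all m ≥ 1 is nilpotent. -/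
/-!
Embed `R` in an algebraically closed field `K` of the same characteristic. On `K[G]`, left
multiplication `f` by `u` has trace `|G|` times the constant term of `u`, so all powers of `f`
have trace zero. Over `K`, the trace of `f ^ m` is `∑ μ ^ m * dim V_μ` over the generalized
eigenspaces `V_μ` of `f`; as the dimensions `1, …, |G|` are nonzero in `K`, a Vandermonde
argument forces `V_μ = 0` for `μ ≠ 0`, so `f` is nilpotent, hence so is `u`.
-/

open Module

theorem natCast_ne_zero_of_lt_ringChar {R : Type*} [NonAssocSemiring R] {d : ℕ} (hd : 0 < d)
    (h : ringChar R = 0 ∨ d < ringChar R) : (d : R) ≠ 0 := by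
  rw [Ne, ringChar.spec]
  rcases h with h | h
  · rw [h, zero_dvd_iff]
    exact hd.ne'
  · exact Nat.not_dvd_of_pos_of_lt hd h

theorem Finset.eq_zero_of_forall_sum_mul_pow_eq_zero {K : Type*} [CommRing K] [IsDomain K]
    (s : Finset K) (c : K → K) (h : ∀ i < s.card, ∑ μ ∈ s, c μ * μ ^ i = 0) :
    ∀ μ ∈ s, c μ = 0 := by
  intro μ hμ
  let e := s.equivFin
  have hc : (fun j => c (e.symm j)) = 0 :=
    Matrix.eq_zero_of_forall_pow_sum_mul_pow_eq_zero (f := fun j => (e.symm j : K))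
      (Subtype.val_injective.comp e.symm.injective) fun i => by
        rw [← h i i.2, ← s.sum_coe_sort]
        exact e.symm.sum_comp fun ν => c ν * ν ^ (i : ℕ)
  simpa [e] using congrFun hc (e ⟨μ, hμ⟩)

namespace Module.End

variable {K V : Type*} [Field K] [AddCommGroup V] [Module K V] [FiniteDimensional K V]

theorem trace_restrict_maxGenEigenspace_pow (f : End K V) (μ : K)
    (h : Set.MapsTo f (f.maxGenEigenspace μ) (f.maxGenEigenspace μ)) (m : ℕ) :
    LinearMap.trace K _ (f.restrict h ^ m) = μ ^ m * finrank K (f.maxGenEigenspace μ) := by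
  induction m with
  | zero => simp
  | succ m ih =>
    have hnil := f.isNilpotent_restrict_maxGenEigenspace_sub_algebraMap μ
    rw [pow_succ, mul_eq_comp,
      LinearMap.trace_comp_eq_mul_of_commute_of_isNilpotent μ ((Commute.refl _).pow_left m) hnil,
      ih, pow_succ]
    ring

theorem trace_pow_eq_sum_pow_mul_finrank {f : End K V} (hf : ⨆ μ, f.maxGenEigenspace μ = ⊤)
    (hN : {μ | f.maxGenEigenspace μ ≠ ⊥}.Finite) (m : ℕ) :
    LinearMap.trace K V (f ^ m) =
      ∑ μ ∈ hN.toFinset, μ ^ m * finrank K (f.maxGenEigenspace μ) := by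
  classical
  have hds := DirectSum.isInternal_submodule_of_iSupIndep_of_iSup_eq_top
    f.independent_maxGenEigenspace hf
  rw [LinearMap.trace_eq_sum_trace_restrict' hds hN
    fun μ => f.mapsTo_maxGenEigenspace_of_comm ((Commute.refl f).pow_right m) μ]
  refine Finset.sum_congr rfl fun μ _ => ?_
  rw [← pow_restrict m (f.mapsTo_maxGenEigenspace_of_comm rfl μ),
    trace_restrict_maxGenEigenspace_pow]

theorem maxGenEigenspace_eq_bot_of_trace_pow_eq_zero {f : End K V}
    (hf : ⨆ μ, f.maxGenEigenspace μ = ⊤)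
    (hd : ∀ d : ℕ, 0 < d → d ≤ finrank K V → (d : K) ≠ 0)
    (htr : ∀ m, 0 < m → LinearMap.trace K V (f ^ m) = 0) {μ : K} (hμ : μ ≠ 0) :
    f.maxGenEigenspace μ = ⊥ := by
  by_contra hne
  have hN : {μ | f.maxGenEigenspace μ ≠ ⊥}.Finite :=
    WellFoundedGT.finite_ne_bot_of_iSupIndep f.independent_maxGenEigenspace
  have hsum : ∀ i, ∑ ν ∈ hN.toFinset, ν * finrank K (f.maxGenEigenspace ν) * ν ^ i = 0 :=
    fun i => by
      rw [← htr (i + 1) i.succ_pos, trace_pow_eq_sum_pow_mul_finrank hf hN]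
      exact Finset.sum_congr rfl fun ν _ => by ring
  have hzero := Finset.eq_zero_of_forall_sum_mul_pow_eq_zero _ _ (fun i _ => hsum i) μ
    (hN.mem_toFinset.mpr hne)
  have hpos : 0 < finrank K (f.maxGenEigenspace μ) :=
    Module.finrank_pos_iff.mpr (Submodule.nontrivial_iff_ne_bot.mpr hne)
  exact mul_ne_zero hμ (hd _ hpos (Submodule.finrank_le _)) hzero

theorem isNilpotent_of_trace_pow_eq_zero {f : End K V} (hf : ⨆ μ, f.maxGenEigenspace μ = ⊤)
    (hd : ∀ d : ℕ, 0 < d → d ≤ finrank K V → (d : K) ≠ 0)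
    (htr : ∀ m, 0 < m → LinearMap.trace K V (f ^ m) = 0) : IsNilpotent f := by
  have h0 : f.maxGenEigenspace 0 = ⊤ := by
    refine hf ▸ le_antisymm (le_iSup _ 0) (iSup_le fun μ => ?_)
    rcases eq_or_ne μ 0 with rfl | hμ
    · exact le_rfl
    · rw [maxGenEigenspace_eq_bot_of_trace_pow_eq_zero hf hd htr hμ]
      exact bot_le
  refine ((LinearMap.charpoly_nilpotent_tfae f).out 0 2).mpr fun x => ?_
  obtain ⟨k, hk⟩ := (f.mem_maxGenEigenspace 0 x).mp (h0 ▸ Submodule.mem_top)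
  exact ⟨k, by simpa using hk⟩

end Module.End

namespace MonoidAlgebra

variable {R G : Type*} [CommRing R] [Group G] [Fintype G]

theorem trace_mulLeft (w : MonoidAlgebra R G) :
    LinearMap.trace R (MonoidAlgebra R G) (LinearMap.mulLeft R w)
      = Fintype.card G * w.coeff 1 := by
  classical
  have hdiag (g : G) : LinearMap.toMatrix (basis G R) (basis G R) (LinearMap.mulLeft R w) g g
      = w.coeff 1 := by
    rw [LinearMap.toMatrix_apply, LinearMap.mulLeft_apply, basis_apply]
    change (w * single g 1).coeff g = _
    rw [coeff_mul_single_apply, mul_inv_cancel, mul_one]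
  rw [LinearMap.trace_eq_matrix_trace R (basis G R), Matrix.trace]
  simp only [Matrix.diag_apply, hdiag, Finset.sum_const, Finset.card_univ, nsmul_eq_mul]

end MonoidAlgebra

theorem const_term_zero_imp_nilpotent {R G : Type*} [CommRing R] [IsDomain R]
    [Group G] [Fintype G]
    (hchar : ringChar R = 0 ∨ Fintype.card G < ringChar R)
    (u : MonoidAlgebra R G) (hu : ∀ m : ℕ, 1 ≤ m → (u ^ m).coeff 1 = 0) :
    IsNilpotent u := by
  let K := AlgebraicClosure (FractionRing R)
  have hφ : Function.Injective (algebraMap R K) := by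
    rw [IsScalarTower.algebraMap_eq R (FractionRing R) K]
    exact (algebraMap (FractionRing R) K).injective.comp (IsFractionRing.injective R _)
  have hd (d : ℕ) (hd0 : 0 < d) (hdG : d ≤ finrank K (MonoidAlgebra K G)) : (d : K) ≠ 0 := by
    rw [finrank_eq_card_basis (MonoidAlgebra.basis G K)] at hdG
    rw [← map_natCast (algebraMap R K), map_ne_zero_iff _ hφ]
    exact natCast_ne_zero_of_lt_ringChar hd0 (hchar.imp_right hdG.trans_lt)
  let v := MonoidAlgebra.mapRingHom G (algebraMap R K) u
  have htr (m : ℕ) (hm : 0 < m) : LinearMap.trace K _ (LinearMap.mulLeft K v ^ m) = 0 := by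
    rw [LinearMap.pow_mulLeft, MonoidAlgebra.trace_mulLeft, ← map_pow,
      MonoidAlgebra.coeff_mapRingHom, hu m hm, map_zero, mul_zero]
  have hv : IsNilpotent v := (LinearMap.isNilpotent_mulLeft_iff K v).mp <|
    Module.End.isNilpotent_of_trace_pow_eq_zero (Module.End.iSup_maxGenEigenspace_eq_top _) hd htr
  exact (IsNilpotent.map_iff (MonoidAlgebra.map_injective _ hφ)).mp hv
end

section
/- Let G be a finite group with |G| ≥ 2 and R an integral domain of prime characteristic p with p dividing |G| − 1. Then the element u = −∑_{g ∈ G, g ≠ 1} g of R[G] is a nonzero idempotent with zero coefficient at 1_G; consequently V_G is not a Mathieu subspace of R[G]. -/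
/-!
Since `p ∣ |G| - 1`, the order of `G` is `1` in `R`, so `σ = ∑_g g` satisfies `σ² = |G| σ = σ`
and `u = 1 - σ` is an idempotent whose coefficient is `0` at `1` and `-1` elsewhere.
A nonzero idempotent `e ∈ V_G` breaks the Mathieu property: every power of `e` lies in `V_G`,
yet for `e_g ≠ 0` the coefficient of `g⁻¹ eᵐ` at `1` is `e_g` for all `m ≥ 1`.
-/

open MonoidAlgebra

theorem Nat.cast_eq_one_of_dvd_sub_one {R : Type*} [AddGroupWithOne R] (p : ℕ) [CharP R p]
    {n : ℕ} (hn : 1 ≤ n) (h : p ∣ n - 1) : (n : R) = 1 := by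
  rw [← Nat.cast_one, CharP.natCast_eq_natCast R p]
  exact ((Nat.modEq_iff_dvd' hn).2 h).symm

namespace GroupAlgebra

variable {k G : Type*} [CommSemiring k] [Group G] [Fintype G] [Invertible (Fintype.card G : k)]

theorem isIdempotentElem_average : IsIdempotentElem (average k G) := by
  rw [IsIdempotentElem]
  nth_rw 2 [average]
  rw [Algebra.mul_smul_comm, Finset.mul_sum]
  simp only [of_apply, mul_average_right, Finset.sum_const, Finset.card_univ,
    ← Nat.cast_smul_eq_nsmul k, smul_smul, invOf_mul_self, one_smul]

end GroupAlgebra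

namespace MonoidAlgebra

section Semiring

variable {k G : Type*} [Semiring k]

theorem coeff_sum_single_one [DecidableEq G] (s : Finset G) (x : G) :
    (∑ g ∈ s, single g (1 : k)).coeff x = if x ∈ s then 1 else 0 := by
  simp [coeff_sum, Finsupp.single_apply]

theorem not_forall_coeff_one_mul_pow_mul_eventually_zero [Group G] {e : k[G]}
    (he : IsIdempotentElem e) (he0 : e ≠ 0) (he1 : e.coeff 1 = 0) :
    ¬ ∀ a b c : k[G], (∀ m : ℕ, 1 ≤ m → (a ^ m).coeff 1 = 0) →
      ∃ N : ℕ, ∀ m : ℕ, N ≤ m → (b * a ^ m * c).coeff 1 = 0 := by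
  intro hMathieu
  have hpow (m : ℕ) (hm : 1 ≤ m) : e ^ m = e := he.pow_eq (by omega)
  obtain ⟨g, hg⟩ : ∃ g, e.coeff g ≠ 0 := by
    by_contra! h
    exact he0 (by ext g; simpa using h g)
  obtain ⟨N, hN⟩ := hMathieu e (single g⁻¹ 1) 1 fun m hm => by rw [hpow m hm, he1]
  have hcoeff := hN (N + 1) (by omega)
  rw [hpow _ (by omega), mul_one, coeff_single_mul_apply, inv_inv, mul_one, one_mul] at hcoeff
  exact hg hcoeff

end Semiring

variable {k G : Type*} [CommRing k] [Group G] [Fintype G] [DecidableEq G]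

theorem neg_sum_erase_one_eq_one_sub_average [Invertible (Fintype.card G : k)]
    (hinv : ⅟(Fintype.card G : k) = 1) :
    -∑ g ∈ Finset.univ.erase (1 : G), single g (1 : k) = 1 - GroupAlgebra.average k G := by
  rw [GroupAlgebra.average, hinv, one_smul, ← Finset.add_sum_erase _ _ (Finset.mem_univ 1)]
  simp only [of_apply, one_def]
  abel

theorem isIdempotentElem_neg_sum_erase_one (hcard : (Fintype.card G : k) = 1) :
    IsIdempotentElem (-∑ g ∈ Finset.univ.erase (1 : G), single g (1 : k)) := by
  let _ : Invertible (Fintype.card G : k) := ⟨1, by rw [hcard, mul_one], by rw [hcard, one_mul]⟩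
  rw [neg_sum_erase_one_eq_one_sub_average rfl]
  exact GroupAlgebra.isIdempotentElem_average.one_sub

theorem coeff_neg_sum_erase_one (x : G) :
    (-∑ g ∈ Finset.univ.erase (1 : G), single g (1 : k)).coeff x = if x = 1 then 0 else -1 := by
  rw [coeff_neg, Finsupp.neg_apply, coeff_sum_single_one]
  split_ifs <;> simp_all

end MonoidAlgebra

theorem VG_not_mathieu_of_char_dvd_general {R G : Type*} [CommRing R]
    [Group G] [Fintype G] [DecidableEq G] (hG : 2 ≤ Fintype.card G) (p : ℕ) (hp : p.Prime)
    [CharP R p] (hdvd : p ∣ Fintype.card G - 1) :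
    (let u : MonoidAlgebra R G :=
      -∑ g ∈ Finset.univ.erase (1 : G), MonoidAlgebra.single g (1 : R)
    u ≠ 0 ∧ u ^ 2 = u ∧ u.coeff 1 = 0) ∧
    ¬ (∀ a b c : MonoidAlgebra R G, (∀ m : ℕ, 1 ≤ m → (a ^ m).coeff 1 = 0) →
      ∃ N : ℕ, ∀ m : ℕ, N ≤ m → (b * a ^ m * c).coeff 1 = 0) := by
  have : Nontrivial R := CharP.nontrivial_of_char_ne_one hp.ne_one
  have hidem := isIdempotentElem_neg_sum_erase_one (k := R) (G := G)
    (Nat.cast_eq_one_of_dvd_sub_one p (by omega) hdvd)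
  obtain ⟨g, hg⟩ := Fintype.exists_ne_of_one_lt_card (by omega) (1 : G)
  have hu0 : -∑ g ∈ Finset.univ.erase (1 : G), single g (1 : R) ≠ 0 :=
    ne_of_apply_ne (coeff · g) <| by
      rw [coeff_neg_sum_erase_one, if_neg hg, coeff_zero, Finsupp.zero_apply]
      exact neg_ne_zero.2 one_ne_zero
  have hu1 := coeff_neg_sum_erase_one (k := R) (1 : G)
  rw [if_pos rfl] at hu1
  exact ⟨⟨hu0, hidem.pow_eq two_ne_zero, hu1⟩,
    not_forall_coeff_one_mul_pow_mul_eventually_zero hidem hu0 hu1⟩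

theorem VG_not_mathieu_of_char_dvd {R G : Type*} [CommRing R] [IsDomain R]
    [Group G] [Fintype G] [DecidableEq G] (hG : 2 ≤ Fintype.card G) (p : ℕ) (hp : p.Prime)
    [CharP R p] (hdvd : p ∣ Fintype.card G - 1) :
    (let u : MonoidAlgebra R G :=
      -∑ g ∈ Finset.univ.erase (1 : G), MonoidAlgebra.single g (1 : R)
    u ≠ 0 ∧ u ^ 2 = u ∧ u.coeff 1 = 0) ∧
    ¬ (∀ a b c : MonoidAlgebra R G, (∀ m : ℕ, 1 ≤ m → (a ^ m).coeff 1 = 0) →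
      ∃ N : ℕ, ∀ m : ℕ, N ≤ m → (b * a ^ m * c).coeff 1 = 0) :=
  VG_not_mathieu_of_char_dvd_general hG p hp hdvd
end

section
/- Let R be a commutative ring, G a group (not necessarily finite), and H a subgroup of G. If V_G (elements of R[G] with zero coefficient at 1_G) is a Mathieu subspace of R[G], then V_H is a Mathieu subspace of R[H]. -/
open Function

namespace MonoidAlgebra

variable {R M N : Type*} [Semiring R]

lemma coeff_mapDomain_apply_of_injective {f : M → N} (hf : Injective f) (x : R[M]) (m : M) :
    (mapDomain f x).coeff (f m) = x.coeff m :=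
  Finsupp.mapDomain_apply hf x.coeff m

variable [Monoid M] [Monoid N]

lemma coeff_one_mapDomainRingHom_of_injective {f : M →* N} (hf : Injective f) (x : R[M]) :
    (mapDomainRingHom R f x).coeff 1 = x.coeff 1 := by
  simpa using coeff_mapDomain_apply_of_injective hf x 1

variable (R M) in
/-- The kernel of `x ↦ x.coeff 1` is a Mathieu subspace of `R[M]`. -/
def KerCoeffOneIsMathieu : Prop :=
  ∀ a b c : R[M], (∀ m : ℕ, 1 ≤ m → (a ^ m).coeff 1 = 0) →
    ∃ N : ℕ, ∀ m : ℕ, N ≤ m → (b * a ^ m * c).coeff 1 = 0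

/-- An injective monoid hom embeds `R[M]` in `R[N]` as a subring on which `coeff 1` is unchanged,
so both the hypothesis and the conclusion of the Mathieu property transfer. -/
lemma KerCoeffOneIsMathieu.of_injective {f : M →* N} (hf : Injective f)
    (hN : KerCoeffOneIsMathieu R N) : KerCoeffOneIsMathieu R M := by
  intro a b c ha
  set φ := mapDomainRingHom R f
  obtain ⟨n, hn⟩ := hN (φ a) (φ b) (φ c) fun m hm => by
    rw [← map_pow, coeff_one_mapDomainRingHom_of_injective hf]
    exact ha m hm
  refine ⟨n, fun m hm => ?_⟩
  rw [← coeff_one_mapDomainRingHom_of_injective hf, map_mul, map_mul, map_pow]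
  exact hn m hm

end MonoidAlgebra

theorem subgroup_mathieu {R G : Type*} [CommRing R] [Group G] (H : Subgroup G)
    (hM : ∀ a b c : MonoidAlgebra R G, (∀ m : ℕ, 1 ≤ m → (a ^ m).coeff 1 = 0) →
      ∃ N : ℕ, ∀ m : ℕ, N ≤ m → (b * a ^ m * c).coeff 1 = 0) :
    ∀ a b c : MonoidAlgebra R H, (∀ m : ℕ, 1 ≤ m → (a ^ m).coeff 1 = 0) →
      ∃ N : ℕ, ∀ m : ℕ, N ≤ m → (b * a ^ m * c).coeff 1 = 0 :=
  MonoidAlgebra.KerCoeffOneIsMathieu.of_injective H.subtype_injective hM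
end

section
/- Let R be an integral domain of prime characteristic p, and G a finite abelian group of order d with p ∤ d, such that R contains a primitive d-th root of unity. If p ≤ d, then V_G (the elements of R[G] with zero coefficient at the identity) is not a Mathieu subspace of R[G]. -/
/-!
For a character `χ : G →* Rˣ` put `e_χ = ∑ g, χ(g⁻¹) g`. Orthogonality of characters gives
`e_χ e_ψ = δ_{χψ} d e_ψ`, where `d = |G|`. Since `R` has a primitive `d`-th root of unity, `G` has
`d ≥ p` characters; let `a` be the sum of `e_χ` over `p` of them. Then `a² = d a`, so
`a^m = d^(m-1) a`, whose coefficient at `1` is `d^(m-1) p = 0`. But for one of the chosen `χ`,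
`e_χ a^m = d^m e_χ` has coefficient `d^m ≠ 0` at `1`, because `p ∤ d`.
-/

open Finset

lemma pow_succ_eq_pow_smul_of_mul_self_eq_smul {R A : Type*} [CommSemiring R] [Semiring A]
    [Algebra R A] {a : A} {c : R} (h : a * a = c • a) (m : ℕ) : a ^ (m + 1) = c ^ m • a := by
  induction m with
  | zero => simp
  | succ m ih => rw [pow_succ, ih, smul_mul_assoc, h, smul_smul, pow_succ]

lemma exists_finset_monoidHom_units_card_eq {G M : Type*} [CommGroup G] [Finite G]
    [CommMonoid M] [HasEnoughRootsOfUnity M (Monoid.exponent G)] {n : ℕ} (hn : n ≤ Nat.card G) :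
    ∃ S : Finset (G →* Mˣ), #S = n := by
  have := Fintype.ofFinite (G →* Mˣ)
  obtain ⟨S, -, hS⟩ := exists_subset_card_eq (s := (univ : Finset (G →* Mˣ))) (n := n)
    (by rwa [card_univ, ← Nat.card_eq_fintype_card,
      CommGroup.card_monoidHom_of_hasEnoughRootsOfUnity])
  exact ⟨S, hS⟩

namespace MonoidAlgebra

variable {R G : Type*} [CommRing R] [Group G] [Fintype G]

noncomputable def charElem (χ : G →* Rˣ) : MonoidAlgebra R G :=
  ∑ g : G, single g (χ g⁻¹ : R)

lemma coeff_charElem (χ : G →* Rˣ) (x : G) : (charElem χ).coeff x = χ x⁻¹ := by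
  classical
  simp [charElem, coeff_sum, Finsupp.single_apply]

lemma single_mul_charElem (g : G) (r : R) (χ : G →* Rˣ) :
    single g r * charElem χ = (r * χ g) • charElem χ := by
  rw [charElem, mul_sum, smul_sum]
  refine Fintype.sum_equiv (Equiv.mulLeft g) _ _ fun k => ?_
  simp only [single_mul_single, smul_single', Equiv.coe_mulLeft, mul_inv_rev, map_mul, map_inv,
    Units.val_mul, mul_assoc]
  rw [mul_left_comm (χ g : R), Units.mul_inv, mul_one]

lemma charElem_mul_charElem (χ ψ : G →* Rˣ) :
    charElem χ * charElem ψ = (∑ g : G, (χ g⁻¹ * ψ g : R)) • charElem ψ := by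
  rw [charElem, sum_mul, sum_smul]
  simp only [single_mul_charElem]

lemma charElem_mul_charElem_self (χ : G →* Rˣ) :
    charElem χ * charElem χ = (Fintype.card G : R) • charElem χ := by
  simp [charElem_mul_charElem, ← Units.val_mul]

lemma charElem_mul_charElem_of_ne [IsDomain R] {χ ψ : G →* Rˣ} (h : χ ≠ ψ) :
    charElem χ * charElem ψ = 0 := by
  have hne : (Units.coeHom R).comp (χ⁻¹ * ψ) ≠ 1 := fun h1 => h <| MonoidHom.ext fun g =>
    inv_mul_eq_one.mp <| Units.ext congr($h1 g)
  have hsum : ∑ g, (χ g⁻¹ * ψ g : R) = ∑ g, (Units.coeHom R).comp (χ⁻¹ * ψ) g := by simp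
  rw [charElem_mul_charElem, hsum, sum_hom_units_eq_zero _ hne, zero_smul]

variable {S : Finset (G →* Rˣ)}

lemma coeff_sum_charElem_one : (∑ χ ∈ S, charElem χ).coeff 1 = #S := by
  simp [coeff_sum, coeff_charElem]

variable [IsDomain R]

lemma charElem_mul_sum_charElem {ψ : G →* Rˣ} (hψ : ψ ∈ S) :
    charElem ψ * ∑ χ ∈ S, charElem χ = (Fintype.card G : R) • charElem ψ := by
  rw [mul_sum, sum_eq_single_of_mem ψ hψ fun χ _ hχ => charElem_mul_charElem_of_ne hχ.symm,
    charElem_mul_charElem_self]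

lemma sum_charElem_mul_self :
    (∑ χ ∈ S, charElem χ) * ∑ χ ∈ S, charElem χ =
      (Fintype.card G : R) • ∑ χ ∈ S, charElem χ := by
  rw [sum_mul, smul_sum]
  exact sum_congr rfl fun ψ hψ => charElem_mul_sum_charElem hψ

lemma charElem_mul_sum_charElem_pow {ψ : G →* Rˣ} (hψ : ψ ∈ S) (m : ℕ) :
    charElem ψ * (∑ χ ∈ S, charElem χ) ^ m = (Fintype.card G : R) ^ m • charElem ψ := by
  induction m with
  | zero => simp
  | succ m ih =>
    rw [pow_succ, ← mul_assoc, ih, smul_mul_assoc, charElem_mul_sum_charElem hψ, smul_smul,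
      pow_succ]

end MonoidAlgebra

open MonoidAlgebra

theorem VG_not_mathieu_of_char_le_card {R G : Type*} [CommRing R] [IsDomain R]
    [CommGroup G] [Fintype G] (p : ℕ) (hp : p.Prime) [CharP R p]
    (hpd : ¬ p ∣ Fintype.card G) (ξ : R) (hξ : IsPrimitiveRoot ξ (Fintype.card G))
    (hle : p ≤ Fintype.card G) :
    ¬ (∀ a b c : MonoidAlgebra R G, (∀ m : ℕ, 1 ≤ m → (a ^ m).coeff 1 = 0) →
      ∃ N : ℕ, ∀ m : ℕ, N ≤ m → (b * a ^ m * c).coeff 1 = 0) := by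
  intro H
  have : NeZero (Fintype.card G) := ⟨Fintype.card_ne_zero⟩
  have : HasEnoughRootsOfUnity R (Fintype.card G) := ⟨⟨ξ, hξ⟩, inferInstance⟩
  have := HasEnoughRootsOfUnity.of_dvd R (Group.exponent_dvd_card (G := G))
  obtain ⟨S, hS⟩ := exists_finset_monoidHom_units_card_eq (M := R)
    (hle.trans_eq Nat.card_eq_fintype_card.symm)
  obtain ⟨ψ, hψ⟩ : S.Nonempty := card_pos.mp (hS ▸ hp.pos)
  have hd : (Fintype.card G : R) ≠ 0 := fun h => hpd ((CharP.cast_eq_zero_iff R p _).mp h)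
  have ha (m : ℕ) : ((∑ χ ∈ S, charElem χ) ^ (m + 1)).coeff 1 = 0 := by
    rw [pow_succ_eq_pow_smul_of_mul_self_eq_smul sum_charElem_mul_self, coeff_smul_apply,
      coeff_sum_charElem_one, hS, CharP.cast_eq_zero R p, smul_zero]
  obtain ⟨N, hN⟩ := H _ (charElem ψ) 1 fun m hm => by
    obtain ⟨k, rfl⟩ := Nat.exists_eq_add_of_le' hm
    exact ha k
  have hψN := hN N le_rfl
  rw [mul_one, charElem_mul_sum_charElem_pow hψ, coeff_smul_apply, coeff_charElem, inv_one,
    map_one, Units.val_one, smul_eq_mul, mul_one] at hψN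
  exact pow_ne_zero N hd hψN
end
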